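/- arXiv:1804.09447 — 4 statements merged into one kernel-verified Lean document; each statement's English description precedes it below -/
import Mathlib

section
/- Define on the integers ℤ the relation l < m if and only if l + 2 ≤ m, and the colouring c : ℤ → ℤ/5ℤ given by c(l) = l mod 5. Then (ℤ, <, c) is a Φ-structure: the relation < is irreflexive and transitive; any two distinct integers with the same colour are comparable; any two integers l, m with c(m) = c(l)+2 or c(m) = c(l)+3 are comparable; and every l ∈ ℤ has a right-witness (namely l+1) and a left-witness (namely l−1). In particular, the sentence Φ is satisfiable (over an infinite domain). -/
/-- A Φ-structure: an irreflexive transitive relation `lt` and a colouring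
`c : A → ZMod 5` such that distinct elements of the same colour are comparable,
elements whose colours differ by 2 or 3 are comparable, and every element has a
right-witness and a left-witness (incomparable, colour plus/minus one). -/
def IsPhiStructure {A : Type*} (lt : A → A → Prop) (c : A → ZMod 5) : Prop :=
  (∀ x, ¬ lt x x) ∧
  (∀ x y z, lt x y → lt y z → lt x z) ∧
  (∀ x y, x ≠ y → c x = c y → lt x y ∨ lt y x) ∧
  (∀ x y, (c y = c x + 2 ∨ c y = c x + 3) → lt x y ∨ lt y x) ∧
  (∀ x, ∃ y, c y = c x + 1 ∧ x ≠ y ∧ ¬ lt x y ∧ ¬ lt y x) ∧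
  (∀ x, ∃ y, c y = c x - 1 ∧ x ≠ y ∧ ¬ lt x y ∧ ¬ lt y x)

lemma zmod5_diff (x y d : ℤ) (h : (y : ZMod 5) = (x : ZMod 5) + (d : ℤ)) :
    (5 : ℤ) ∣ y - x - d := by
  have : ((y - x - d : ℤ) : ZMod 5) = 0 := by push_cast; rw [h]; ring
  exact_mod_cast (ZMod.intCast_zmod_eq_zero_iff_dvd _ 5).mp this

/-- On ℤ, the relation `l < m ↔ l + 2 ≤ m` together with the
colouring `l ↦ l mod 5` is a Φ-structure, with `l+1` a right-witness and `l-1` a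
left-witness of each `l`; in particular Φ is satisfiable over an infinite domain. -/
theorem int_is_phi_structure :
    IsPhiStructure (fun l m : ℤ => l + 2 ≤ m) (fun l : ℤ => (l : ZMod 5)) ∧
    (∀ l : ℤ, ((l + 1 : ℤ) : ZMod 5) = (l : ZMod 5) + 1 ∧ l ≠ l + 1 ∧
      ¬ (l + 2 ≤ l + 1) ∧ ¬ ((l + 1) + 2 ≤ l)) ∧
    (∀ l : ℤ, ((l - 1 : ℤ) : ZMod 5) = (l : ZMod 5) - 1 ∧ l ≠ l - 1 ∧
      ¬ (l + 2 ≤ l - 1) ∧ ¬ ((l - 1) + 2 ≤ l)) ∧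
    Infinite ℤ := by
  refine ⟨⟨fun x => by omega, fun x y z h1 h2 => by omega, ?_, ?_, ?_, ?_⟩,
    fun l => ⟨by push_cast; ring, by omega, by omega, by omega⟩,
    fun l => ⟨by push_cast; ring, by omega, by omega, by omega⟩,
    inferInstance⟩
  · intro x y hne h
    have := zmod5_diff x y 0 (by simpa using h.symm)
    obtain ⟨k, hk⟩ := this
    omega
  · intro x y h
    rcases h with h | h
    · obtain ⟨k, hk⟩ := zmod5_diff x y 2 (by simpa using h)
      omega
    · obtain ⟨k, hk⟩ := zmod5_diff x y 3 (by simpa using h)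
      omega
  · exact fun x => ⟨x + 1, by push_cast; ring, by omega, by omega, by omega⟩
  · exact fun x => ⟨x - 1, by push_cast; ring, by omega, by omega, by omega⟩
end

section
/- Let (A, <, c) be a Φ-structure and let (a_l)_{l ∈ ℤ} be a quasi-chain in A such that a_0 < a_2. Then for all integers l, m with l + 2 ≤ m one has a_l < a_m. -/
/-- A quasi-chain: a ℤ-indexed sequence where each `a (l+1)` is a right-witness
of `a l`. -/
def IsQuasiChain {A : Type*} (lt : A → A → Prop) (c : A → ZMod 5) (a : ℤ → A) : Prop :=
  ∀ l : ℤ, c (a (l + 1)) = c (a l) + 1 ∧ a l ≠ a (l + 1) ∧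
    ¬ lt (a l) (a (l + 1)) ∧ ¬ lt (a (l + 1)) (a l)


/-!
Colours along a quasi-chain increase by one per step, so terms at distance 2 or 3 are comparable,
while neighbours are incomparable. Under these constraints `a l < a (l + 2)` holds iff
`a (l + 1) < a (l + 3)`: a reversed comparison at either end would, via the comparable pair
`a l`, `a (l + 3)`, make two neighbours comparable. So `a 0 < a 2` spreads to every `l`, which in
turn excludes `a (l + 3) < a l`, and transitivity covers all larger distances.
-/

theorem IsPhiStructure.lt_trans {A : Type*} {lt : A → A → Prop} {c : A → ZMod 5}
    (hPhi : IsPhiStructure lt c) {x y z : A} : lt x y → lt y z → lt x z :=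
  hPhi.2.1 x y z

namespace IsQuasiChain

variable {A : Type*} {lt : A → A → Prop} {c : A → ZMod 5} {a : ℤ → A}

theorem color_add (hqc : IsQuasiChain lt c a) (l : ℤ) (n : ℕ) :
    c (a (l + n)) = c (a l) + n := by
  induction n with
  | zero => simp
  | succ n ih =>
    rw [Nat.cast_succ, ← add_assoc, (hqc _).1, ih]
    push_cast
    ring

theorem not_lt_succ (hqc : IsQuasiChain lt c a) {l m : ℤ} (h : m = l + 1) :
    ¬ lt (a l) (a m) :=
  h ▸ (hqc l).2.2.1

theorem not_succ_lt (hqc : IsQuasiChain lt c a) {l m : ℤ} (h : m = l + 1) :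
    ¬ lt (a m) (a l) :=
  h ▸ (hqc l).2.2.2

theorem comparable_add_two (hqc : IsQuasiChain lt c a) (hPhi : IsPhiStructure lt c) {l m : ℤ}
    (h : m = l + 2) : lt (a l) (a m) ∨ lt (a m) (a l) :=
  hPhi.2.2.2.1 _ _ <| Or.inl <| by simpa [h] using hqc.color_add l 2

theorem comparable_add_three (hqc : IsQuasiChain lt c a) (hPhi : IsPhiStructure lt c) {l m : ℤ}
    (h : m = l + 3) : lt (a l) (a m) ∨ lt (a m) (a l) :=
  hPhi.2.2.2.1 _ _ <| Or.inr <| by simpa [h] using hqc.color_add l 3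

theorem lt_add_two_iff (hqc : IsQuasiChain lt c a) (hPhi : IsPhiStructure lt c) (l : ℤ) :
    lt (a l) (a (l + 2)) ↔ lt (a (l + 1)) (a (l + 1 + 2)) := by
  have h03 := hqc.comparable_add_three hPhi (l := l) (m := l + 1 + 2) (by ring)
  constructor
  · intro h02
    refine (hqc.comparable_add_two hPhi rfl).resolve_right fun h31 => ?_
    rcases h03 with h03 | h30
    · exact hqc.not_lt_succ rfl (hPhi.lt_trans h03 h31)
    · exact hqc.not_succ_lt (by ring) (hPhi.lt_trans h30 h02)
  · intro h13
    refine (hqc.comparable_add_two hPhi rfl).resolve_right fun h20 => ?_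
    rcases h03 with h03 | h30
    · exact hqc.not_lt_succ (by ring) (hPhi.lt_trans h20 h03)
    · exact hqc.not_succ_lt rfl (hPhi.lt_trans h13 h30)

theorem lt_add_two (hqc : IsQuasiChain lt c a) (hPhi : IsPhiStructure lt c)
    (h02 : lt (a 0) (a 2)) (l : ℤ) : lt (a l) (a (l + 2)) := by
  induction l using Int.induction_on with
  | zero => exact h02
  | succ k ih => exact (hqc.lt_add_two_iff hPhi k).1 ih
  | pred k ih => exact (hqc.lt_add_two_iff hPhi _).2 (by rwa [sub_add_cancel])

theorem lt_add_three (hqc : IsQuasiChain lt c a) (hPhi : IsPhiStructure lt c)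
    (h02 : lt (a 0) (a 2)) (l : ℤ) : lt (a l) (a (l + 2 + 1)) := by
  refine (hqc.comparable_add_three hPhi (by ring)).resolve_right fun h30 => ?_
  have h13 : lt (a (l + 1)) (a (l + 2 + 1)) := by
    simpa only [add_right_comm] using hqc.lt_add_two hPhi h02 (l + 1)
  exact hqc.not_succ_lt rfl (hPhi.lt_trans h13 h30)

theorem lt_of_add_two_le (hqc : IsQuasiChain lt c a) (hPhi : IsPhiStructure lt c)
    (h02 : lt (a 0) (a 2)) {l m : ℤ} (hlm : l + 2 ≤ m) : lt (a l) (a m) := by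
  suffices lt (a l) (a m) ∧ lt (a l) (a (m + 1)) from this.1
  induction m, hlm using Int.leInduction with
  | base => exact ⟨hqc.lt_add_two hPhi h02 l, hqc.lt_add_three hPhi h02 l⟩
  | succ m _ ih =>
    refine ⟨ih.2, ?_⟩
    rw [add_assoc, one_add_one_eq_two]
    exact hPhi.lt_trans ih.1 (hqc.lt_add_two hPhi h02 m)

end IsQuasiChain

/-- In a Φ-structure, a quasi-chain with `a 0 < a 2` satisfies
`a l < a m` whenever `l + 2 ≤ m`. -/
theorem quasiChain_lt {A : Type*} (lt : A → A → Prop) (c : A → ZMod 5)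
    (hPhi : IsPhiStructure lt c) (a : ℤ → A) (hqc : IsQuasiChain lt c a)
    (h02 : lt (a 0) (a 2)) :
    ∀ l m : ℤ, l + 2 ≤ m → lt (a l) (a m) :=
  fun _ _ hlm => hqc.lt_of_add_two_le hPhi h02 hlm
end

section
/- Every nonempty Φ-structure is infinite; that is, if A is a nonempty set carrying an irreflexive transitive relation < and a colouring c : A → ℤ/5ℤ satisfying conditions (1)–(3) of a Φ-structure, then A is an infinite set. (The sentence Φ is an axiom of infinity.) -/
/-- Every nonempty Φ-structure is infinite (Φ is an axiom of
infinity). -/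
theorem phi_structure_infinite {A : Type*} [Nonempty A]
    (lt : A → A → Prop) (c : A → ZMod 5) (hPhi : IsPhiStructure lt c) :
    Infinite A := by
  obtain ⟨hirr, htrans, hsame, hdiff, hr, hl⟩ := hPhi
  by_contra hfin
  rw [not_infinite_iff_finite] at hfin
  haveI := hfin
  haveI : IsTrans A (flip lt) := ⟨fun a b d h1 h2 => htrans _ _ _ h2 h1⟩
  haveI : IsIrrefl A (flip lt) := ⟨fun a => hirr a⟩
  have wf : WellFounded (flip lt) := Finite.wellFounded_of_trans_of_irrefl _
  -- a global maximal element
  obtain ⟨m, -, hm⟩ := wf.has_min Set.univ ⟨Classical.arbitrary A, trivial⟩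
  have hmax : ∀ x, ¬ lt m x := fun x h => hm x trivial h
  -- each nonempty colour class has a maximum
  have classmax : ∀ k : ZMod 5, (∃ a, c a = k) →
      ∃ M, c M = k ∧ ∀ u, c u = k → u = M ∨ lt u M := by
    rintro k ⟨a, ha⟩
    obtain ⟨M, hMk, hMmin⟩ := wf.has_min {u | c u = k} ⟨a, ha⟩
    refine ⟨M, hMk, fun u hu => ?_⟩
    by_cases h : u = M
    · exact Or.inl h
    · rcases hsame u M h (hu.trans hMk.symm) with h1 | h1
      · exact Or.inr h1
      · exact absurd h1 (hMmin u hu)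
  -- colour classes c m + 1 .. c m + 4 are nonempty
  obtain ⟨y1, hy1, -⟩ := hr m
  obtain ⟨y2, hy2, -⟩ := hr y1
  obtain ⟨y3, hy3, -⟩ := hr y2
  obtain ⟨y4, hy4, -⟩ := hr y3
  have hy2' : c y2 = c m + 2 := by
    rw [hy2, hy1, add_assoc]; norm_num
  have hy3' : c y3 = c m + 3 := by
    rw [hy3, hy2', add_assoc]; norm_num
  have hy4' : c y4 = c m + 4 := by
    rw [hy4, hy3', add_assoc]; norm_num
  obtain ⟨M1, hM1c, hM1⟩ := classmax (c m + 1) ⟨y1, hy1⟩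
  obtain ⟨M2, hM2c, hM2⟩ := classmax (c m + 2) ⟨y2, hy2'⟩
  obtain ⟨M3, hM3c, hM3⟩ := classmax (c m + 3) ⟨y3, hy3'⟩
  obtain ⟨M4, hM4c, hM4⟩ := classmax (c m + 4) ⟨y4, hy4'⟩
  -- M2 < m and M3 < m
  have hM2m : lt M2 m := by
    rcases hdiff m M2 (Or.inl hM2c) with h | h
    · exact absurd h (hmax _)
    · exact h
  have hM3m : lt M3 m := by
    rcases hdiff m M3 (Or.inr hM3c) with h | h
    · exact absurd h (hmax _)
    · exact h
  -- right witness z of m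
  obtain ⟨z, hzc, -, hmz, hzm⟩ := hr m
  -- left witness x of m
  obtain ⟨x, hxc, -, hmx, hxm⟩ := hl m
  have hxc' : c x = c m + 4 := by
    have h4 : (-1 : ZMod 5) = 4 := by decide
    rw [hxc, sub_eq_add_neg, h4]
  -- M3 < z
  have hM3z : lt M3 z := by
    have hcz : c z = c M3 + 3 := by
      have h33 : (3 + 3 : ZMod 5) = 1 := by decide
      rw [hzc, hM3c, add_assoc, h33]
    rcases hdiff M3 z (Or.inr hcz) with h | h
    · exact h
    · exact absurd (htrans _ _ _ h hM3m) hzm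
  -- M2 < x
  have hM2x : lt M2 x := by
    have hcx : c x = c M2 + 2 := by
      rw [hxc', hM2c, add_assoc]; norm_num
    rcases hdiff M2 x (Or.inl hcx) with h | h
    · exact h
    · exact absurd (htrans _ _ _ h hM2m) hxm
  -- z ≤ M1, x ≤ M4
  have hzM1 := hM1 z hzc
  have hxM4 := hM4 x hxc'
  -- z and x are comparable
  have hcx3 : c x = c z + 3 := by
    rw [hxc', hzc, add_assoc]; norm_num
  rcases hdiff z x (Or.inr hcx3) with hzx | hxz
  · -- z < x : contradiction with left witness of M4
    obtain ⟨w, hwc, -, -, hwM4⟩ := hl M4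
    have hwc' : c w = c m + 3 := by
      rw [hwc, hM4c, sub_eq_add_neg, add_assoc]
      norm_num
    have hwM3 := hM3 w hwc'
    have hwx : lt w x := by
      rcases hwM3 with h | h
      · exact h ▸ htrans _ _ _ hM3z hzx
      · exact htrans _ _ _ h (htrans _ _ _ hM3z hzx)
    rcases hxM4 with h | h
    · exact hwM4 (h ▸ hwx)
    · exact hwM4 (htrans _ _ _ hwx h)
  · -- x < z : contradiction with right witness of M1
    obtain ⟨w, hwc, -, -, hwM1⟩ := hr M1
    have hwc' : c w = c m + 2 := by
      rw [hwc, hM1c, add_assoc]; norm_num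
    have hwM2 := hM2 w hwc'
    have hwz : lt w z := by
      rcases hwM2 with h | h
      · exact h ▸ htrans _ _ _ hM2x hxz
      · exact htrans _ _ _ h (htrans _ _ _ hM2x hxz)
    rcases hzM1 with h | h
    · exact hwM1 (h ▸ hwz)
    · exact hwM1 (htrans _ _ _ hwz h)
end

section
/- Let < be an irreflexive transitive relation on a set A, let P ⊆ A be an infinite chain (any two distinct elements of P are comparable), and let Q ⊆ A be an antichain (any two distinct elements of Q are incomparable). Suppose that every element p ∈ P has an incomparable element in Q (some q ∈ Q with neither p < q nor q < p), and that every element q ∈ Q satisfies q < p for some p ∈ P. Then Q is infinite. -/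
/-! If `Q` were finite, the elements of the chain `P` lying above its members would have a largest
one `m`, so all of `Q` would lie below `m`; but `m` is incomparable with some element of `Q`. -/

open Relation

theorem IsChain.exists_mem_forall_rel_of_finite {α : Type*} {r : α → α → Prop} [IsTrans α r]
    {s t : Set α} (hs : IsChain r s) (ht : t.Finite) (hne : t.Nonempty)
    (hbound : ∀ x ∈ t, ∃ y ∈ s, r x y) : ∃ m ∈ s, ∀ x ∈ t, r x m := by
  choose f hfs hf using hbound
  have : Nonempty t := hne.to_subtype
  have : Finite t := ht.to_subtype
  have hs' : IsChain (ReflGen r) s := hs.mono_rel fun _ _ => ReflGen.single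
  have hdir : Directed (ReflGen r) fun x : t => f x x.2 := by
    rintro ⟨x, hx⟩ ⟨y, hy⟩
    rcases hs'.total (hfs x hx) (hfs y hy) with hxy | hyx
    · exact ⟨⟨y, hy⟩, hxy, ReflGen.refl⟩
    · exact ⟨⟨x, hx⟩, ReflGen.refl, hyx⟩
  obtain ⟨⟨z, hz⟩, hmax⟩ := hdir.finite_le id
  refine ⟨f z hz, hfs z hz, fun x hx => ?_⟩
  rcases reflGen_iff _ _ _ |>.mp (hmax ⟨x, hx⟩) with heq | hlt
  · exact heq ▸ hf x hx
  · exact _root_.trans (hf x hx) hlt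

theorem antichain_infinite_general {A : Type*} (lt : A → A → Prop)
    (htrans : ∀ x y z, lt x y → lt y z → lt x z)
    (P Q : Set A) (hPinf : P.Infinite)
    (hPchain : ∀ p ∈ P, ∀ p' ∈ P, p ≠ p' → lt p p' ∨ lt p' p)
    (hPwit : ∀ p ∈ P, ∃ q ∈ Q, ¬ lt p q ∧ ¬ lt q p)
    (hQwit : ∀ q ∈ Q, ∃ p ∈ P, lt q p) :
    Q.Infinite := by
  intro hQfin
  have : IsTrans A lt := ⟨htrans⟩
  obtain ⟨p₀, hp₀⟩ := hPinf.nonempty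
  obtain ⟨q₀, hq₀, -⟩ := hPwit p₀ hp₀
  have hchain : IsChain lt P := fun p hp p' hp' => hPchain p hp p' hp'
  obtain ⟨m, hmP, hQm⟩ := hchain.exists_mem_forall_rel_of_finite hQfin ⟨q₀, hq₀⟩ hQwit
  obtain ⟨q, hq, -, hqm⟩ := hPwit m hmP
  exact hqm (hQm q hq)

/-- If `<` is a strict partial order, `P` is an infinite chain,
`Q` an antichain, every element of `P` is incomparable with some element of `Q`,
and every element of `Q` lies below some element of `P`, then `Q` is infinite. -/
theorem antichain_infinite {A : Type*} (lt : A → A → Prop)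
    (hirr : ∀ x, ¬ lt x x) (htrans : ∀ x y z, lt x y → lt y z → lt x z)
    (P Q : Set A) (hPinf : P.Infinite)
    (hPchain : ∀ p ∈ P, ∀ p' ∈ P, p ≠ p' → lt p p' ∨ lt p' p)
    (hQanti : ∀ q ∈ Q, ∀ q' ∈ Q, q ≠ q' → ¬ lt q q' ∧ ¬ lt q' q)
    (hPwit : ∀ p ∈ P, ∃ q ∈ Q, ¬ lt p q ∧ ¬ lt q p)
    (hQwit : ∀ q ∈ Q, ∃ p ∈ P, lt q p) :
    Q.Infinite :=
  antichain_infinite_general lt htrans P Q hPinf hPchain hPwit hQwit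
end
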